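/- Every element of S satisfies x⁴ = 1, and for x ∈ S one has x² = 1 if and only if x lies in the center Z(S) = {(0, b) : b ∈ F₈}. Consequently Ω₁(S), the subgroup generated by the elements of order at most 2, equals Z(S), and every element of S outside the center has order exactly 4. -/

import Mathlib

/-- The field with 8 elements. -/
noncomputable abbrev F8 : Type := GaloisField 2 3

/-- A Sylow 2-subgroup of the Suzuki group `Sz(8)`: the underlying set is `F₈ × F₈`
with multiplication `(a, b) * (c, d) = (a + c, b + d + c * a ^ 4)`. -/
structure SylowSz8 where
  a : F8
  b : F8

namespace SylowSz8

noncomputable instance : Mul SylowSz8 :=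
  ⟨fun x y => ⟨x.a + y.a, x.b + y.b + y.a * x.a ^ 4⟩⟩

noncomputable instance : One SylowSz8 := ⟨⟨0, 0⟩⟩

noncomputable instance : Inv SylowSz8 := ⟨fun x => ⟨x.a, x.b + x.a ^ 5⟩⟩

@[simp] theorem mul_a (x y : SylowSz8) : (x * y).a = x.a + y.a := rfl
@[simp] theorem mul_b (x y : SylowSz8) : (x * y).b = x.b + y.b + y.a * x.a ^ 4 := rfl
@[simp] theorem one_a : (1 : SylowSz8).a = 0 := rfl
@[simp] theorem one_b : (1 : SylowSz8).b = 0 := rfl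
@[simp] theorem inv_a (x : SylowSz8) : x⁻¹.a = x.a := rfl
@[simp] theorem inv_b (x : SylowSz8) : x⁻¹.b = x.b + x.a ^ 5 := rfl

theorem ext' : ∀ {x y : SylowSz8}, x.a = y.a → x.b = y.b → x = y
  | ⟨_, _⟩, ⟨_, _⟩, rfl, rfl => rfl

noncomputable instance : Group SylowSz8 where
  mul_assoc x y z := by
    have frob : ∀ u v : F8, (u + v) ^ 4 = u ^ 4 + v ^ 4 := fun u v => by
      have := add_pow_char_pow (R := F8) (p := 2) (n := 2) u v
      simpa using this
    refine ext' ?_ ?_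
    · simp [add_assoc]
    · simp only [mul_b, mul_a, frob]
      ring
  one_mul x := by
    refine ext' ?_ ?_ <;> simp
  mul_one x := by
    refine ext' ?_ ?_ <;> simp
  inv_mul_cancel x := by
    have h2 : ∀ u : F8, u + u = 0 := fun u => CharTwo.add_self_eq_zero u
    refine ext' ?_ ?_
    · simp [h2]
    · simp only [mul_b, inv_a, inv_b, one_b]
      have : x.a * x.a ^ 4 = x.a ^ 5 := by ring
      rw [this]
      calc x.b + x.a ^ 5 + x.b + x.a ^ 5
          = (x.b + x.b) + (x.a ^ 5 + x.a ^ 5) := by ring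
        _ = 0 := by rw [h2, h2, add_zero]

end SylowSz8

/-!
Squaring gives `(a, b) ^ 2 = (0, a ^ 5)`, and squaring once more gives the identity, so `S` has
exponent 4 and the involutions together with `1` are exactly the elements with `a = 0`. These
are also exactly the central elements: `(a, b)` commuting with every `(a * t, 0)` forces
`a ^ 5 * t = a ^ 5 * t ^ 4` for all `t`, which fails for `a ≠ 0` because `X ^ 4 - X` has at most
four roots in `F₈`.
-/

open Polynomial in
theorem exists_pow_ne_self {K : Type*} [Field K] [Finite K] {n : ℕ} (hn : 1 < n)
    (hK : n < Nat.card K) : ∃ t : K, t ^ n ≠ t := by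
  classical
  have := Fintype.ofFinite K
  by_contra! h
  have hroots : (Finset.univ : Finset K).val ⊆ (X ^ n - X : K[X]).roots := fun t _ => by
    simp [mem_roots (FiniteField.X_pow_card_sub_X_ne_zero K hn), h t]
  have := card_le_degree_of_subset_roots hroots
  rw [FiniteField.X_pow_card_sub_X_natDegree_eq K hn, Finset.card_univ,
    ← Nat.card_eq_fintype_card] at this
  omega

namespace SylowSz8

theorem sq_eq_mk (x : SylowSz8) : x ^ 2 = ⟨0, x.a ^ 5⟩ := by
  rw [pow_two]
  refine ext' (CharTwo.add_self_eq_zero x.a) ?_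
  rw [mul_b, CharTwo.add_self_eq_zero, zero_add]
  ring

theorem pow_four_eq_one (x : SylowSz8) : x ^ 4 = 1 := by
  rw [show 4 = 2 * 2 from rfl, pow_mul, sq_eq_mk, sq_eq_mk]
  exact ext' rfl (by simp)

theorem sq_eq_one_iff {x : SylowSz8} : x ^ 2 = 1 ↔ x.a = 0 := by
  rw [sq_eq_mk]
  refine ⟨fun h => pow_eq_zero_iff (n := 5) (by norm_num) |>.mp (congrArg b h),
    fun h => ext' rfl (by simp [h])⟩

theorem mem_center_iff {x : SylowSz8} : x ∈ Subgroup.center SylowSz8 ↔ x.a = 0 := by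
  rw [Subgroup.mem_center_iff]
  refine ⟨fun hx => ?_, fun ha y => ext' (add_comm _ _) ?_⟩
  · by_contra ha
    obtain ⟨t, ht⟩ := exists_pow_ne_self (K := F8) (n := 4) (by norm_num)
      (by rw [GaloisField.card 2 3 (by norm_num)]; norm_num)
    have hcomm : x.a ^ 5 * t = x.a ^ 5 * t ^ 4 := by
      have := congrArg b (hx ⟨x.a * t, 0⟩)
      simp only [mul_b] at this
      linear_combination -this
    exact ht (mul_left_cancel₀ (pow_ne_zero 5 ha) hcomm).symm
  · simp only [mul_b, ha]
    ring

theorem sq_eq_one_iff_mem_center {x : SylowSz8} : x ^ 2 = 1 ↔ x ∈ Subgroup.center SylowSz8 :=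
  sq_eq_one_iff.trans mem_center_iff.symm

theorem orderOf_eq_four_of_notMem_center {x : SylowSz8} (hx : x ∉ Subgroup.center SylowSz8) :
    orderOf x = 4 :=
  orderOf_eq_prime_pow (p := 2) (n := 1) (mt sq_eq_one_iff_mem_center.mp hx) (pow_four_eq_one x)

end SylowSz8

/-- Every element of `S` satisfies `x⁴ = 1`; an element squares to the identity iff it lies
in the center `Z(S) = {(0, b) : b ∈ F₈}`; consequently `Ω₁(S) = Z(S)` and every
non-central element has order exactly 4. -/
theorem exponent_structure_SylowSz8 :
    (∀ x : SylowSz8, x ^ 4 = 1) ∧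
    (∀ x : SylowSz8, x ^ 2 = 1 ↔ x ∈ Subgroup.center SylowSz8) ∧
    (∀ x : SylowSz8, x ∈ Subgroup.center SylowSz8 ↔ x.a = 0) ∧
    Subgroup.closure {x : SylowSz8 | x ^ 2 = 1} = Subgroup.center SylowSz8 ∧
    (∀ x : SylowSz8, x ∉ Subgroup.center SylowSz8 → orderOf x = 4) := by
  have hΩ₁ : {x : SylowSz8 | x ^ 2 = 1} = Subgroup.center SylowSz8 :=
    Set.ext fun _ => SylowSz8.sq_eq_one_iff_mem_center
  exact ⟨SylowSz8.pow_four_eq_one, fun _ => SylowSz8.sq_eq_one_iff_mem_center,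
    fun _ => SylowSz8.mem_center_iff, by rw [hΩ₁, Subgroup.closure_eq],
    fun _ => SylowSz8.orderOf_eq_four_of_notMem_center⟩
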